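/- For every bounded real sequence u and every positive integer k, the limit superior as δ→1⁻ of the Abel sums (1−δ)·∑_{t=1}^{∞} δ^{t−1} u_t is at most the limit superior of the averages (1/(kT))·∑_{t=1}^{kT} u_t as T→∞. -/

import Mathlib

open Filter

def Bdd (u : ℕ → ℝ) : Prop := ∃ C : ℝ, ∀ t, |u t| ≤ C

noncomputable def avg (u : ℕ → ℝ) (T : ℕ) : ℝ := (∑ t ∈ Finset.range T, u t) / T

noncomputable def abel (u : ℕ → ℝ) (δ : ℝ) : ℝ := (1 - δ) * ∑' t : ℕ, δ ^ t * u t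

/-!
Fix `a` above the limsup of the block averages. Since `u` is bounded, the partial sums of
`u - a` are at most `0` at the block ends `k * T` for large `T`, hence bounded above by some `M`
everywhere. Multiplying the power series `∑ δ ^ t (u t - a)` by `∑ δ ^ t` turns it into the series
of partial sums, so it is at most `M`, and `abel u δ ≤ a + (1 - δ) M`, which tends to `a`.
-/

open Finset Topology

lemma Bdd.sub_const {u : ℕ → ℝ} (hu : Bdd u) (a : ℝ) : Bdd fun t => u t - a := by
  obtain ⟨C, hC⟩ := hu
  exact ⟨C + |a|, fun t => (abs_sub _ _).trans (add_le_add_left (hC t) _)⟩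

lemma abs_avg_le {u : ℕ → ℝ} {C : ℝ} (hC : ∀ t, |u t| ≤ C) (n : ℕ) : |avg u n| ≤ C := by
  have hC0 : 0 ≤ C := (abs_nonneg _).trans (hC 0)
  rcases n.eq_zero_or_pos with rfl | hn
  · simpa [avg] using hC0
  have hn' : (0 : ℝ) < n := by exact_mod_cast hn
  rw [avg, abs_div, Nat.abs_cast, div_le_iff₀ hn']
  calc |∑ t ∈ range n, u t| ≤ ∑ t ∈ range n, |u t| := abs_sum_le_sum_abs _ _
    _ ≤ ∑ _t ∈ range n, C := sum_le_sum fun t _ => hC t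
    _ = C * n := by simp [mul_comm]

lemma sum_range_sub_nonpos_of_avg_le {u : ℕ → ℝ} {a : ℝ} {n : ℕ} (h : avg u n ≤ a) :
    ∑ t ∈ range n, (u t - a) ≤ 0 := by
  rw [sum_sub_distrib, sum_const, card_range, nsmul_eq_mul, sub_nonpos]
  rcases n.eq_zero_or_pos with rfl | hn
  · simp
  rwa [avg, div_le_iff₀ (by exact_mod_cast hn), mul_comm] at h

lemma le_add_mul_of_forall_succ_le {f : ℕ → ℝ} {D : ℝ} (hf : ∀ n, f (n + 1) ≤ f n + D)
    (m r : ℕ) : f (m + r) ≤ f m + r * D := by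
  induction r with
  | zero => simp
  | succ r ih =>
    rw [← add_assoc]
    push_cast
    linarith [hf (m + r)]

lemma eventually_le_of_eventually_mul_nonpos {f : ℕ → ℝ} {D : ℝ} (hD : 0 ≤ D)
    (hf : ∀ n, f (n + 1) ≤ f n + D) {k : ℕ} (hk : 0 < k) (h : ∀ᶠ T in atTop, f (k * T) ≤ 0) :
    ∀ᶠ n in atTop, f n ≤ k * D := by
  obtain ⟨T₀, hT₀⟩ := eventually_atTop.1 h
  refine eventually_atTop.2 ⟨k * T₀, fun n hn => ?_⟩
  have hT : T₀ ≤ n / k := (Nat.le_div_iff_mul_le hk).2 (by linarith)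
  have hr : ((n % k : ℕ) : ℝ) ≤ k := by exact_mod_cast (Nat.mod_lt n hk).le
  calc f n = f (k * (n / k) + n % k) := by rw [Nat.div_add_mod]
    _ ≤ f (k * (n / k)) + (n % k : ℕ) * D := le_add_mul_of_forall_succ_le hf _ _
    _ ≤ 0 + k * D := add_le_add (hT₀ _ hT) (mul_le_mul_of_nonneg_right hr hD)
    _ = k * D := zero_add _

lemma exists_sum_range_sub_le {u : ℕ → ℝ} (hu : Bdd u) {k : ℕ} (hk : 0 < k) {a : ℝ}
    (h : ∀ᶠ T in atTop, avg u (k * T) < a) : ∃ M, ∀ n, ∑ t ∈ range n, (u t - a) ≤ M := by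
  obtain ⟨C, hC⟩ := hu.sub_const a
  have hf : ∀ n, ∑ t ∈ range (n + 1), (u t - a) ≤ ∑ t ∈ range n, (u t - a) + C := fun n => by
    rw [sum_range_succ]
    linarith [le_abs_self (u n - a), hC n]
  have hev := eventually_le_of_eventually_mul_nonpos (f := fun n => ∑ t ∈ range n, (u t - a))
    ((abs_nonneg _).trans (hC 0)) hf hk
    (h.mono fun T hT => sum_range_sub_nonpos_of_avg_le hT.le)
  obtain ⟨M, hM⟩ := (isBoundedUnder_of_eventually_le hev).bddAbove_range
  exact ⟨M, fun n => hM ⟨n, rfl⟩⟩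

section Abel

variable {u : ℕ → ℝ} {δ : ℝ}

lemma Bdd.summable_norm_pow_mul (hu : Bdd u) (hδ₀ : 0 ≤ δ) (hδ₁ : δ < 1) :
    Summable fun t => ‖δ ^ t * u t‖ := by
  obtain ⟨C, hC⟩ := hu
  refine .of_nonneg_of_le (fun t => norm_nonneg _) (fun t => ?_)
    ((summable_geometric_of_lt_one hδ₀ hδ₁).mul_right C)
  rw [norm_mul, norm_pow, Real.norm_of_nonneg hδ₀, Real.norm_eq_abs]
  exact mul_le_mul_of_nonneg_left (hC t) (pow_nonneg hδ₀ t)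

lemma hasSum_pow_mul_sum_range_succ (hu : Bdd u) (hδ₀ : 0 ≤ δ) (hδ₁ : δ < 1) :
    HasSum (fun n => δ ^ n * ∑ i ∈ range (n + 1), u i) ((∑' t, δ ^ t * u t) * (1 - δ)⁻¹) := by
  have hgeom : Summable fun n => ‖δ ^ n‖ := by
    simpa [abs_of_nonneg hδ₀] using summable_geometric_of_lt_one hδ₀ hδ₁
  have := hasSum_sum_range_mul_of_summable_norm (hu.summable_norm_pow_mul hδ₀ hδ₁) hgeom
  rw [tsum_geometric_of_lt_one hδ₀ hδ₁] at this
  refine this.congr_fun fun n => ?_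
  rw [mul_sum]
  refine sum_congr rfl fun i hi => ?_
  rw [mul_right_comm, pow_mul_pow_sub δ (Nat.le_of_lt_succ (mem_range.1 hi)), mul_comm]

lemma tsum_pow_mul_le_of_sum_range_le (hu : Bdd u) (hδ₀ : 0 ≤ δ) (hδ₁ : δ < 1) {M : ℝ}
    (hM : ∀ n, ∑ i ∈ range n, u i ≤ M) : ∑' t, δ ^ t * u t ≤ M := by
  have h := hasSum_le (fun n => mul_le_mul_of_nonneg_left (hM (n + 1)) (pow_nonneg hδ₀ n))
    (hasSum_pow_mul_sum_range_succ hu hδ₀ hδ₁) ((hasSum_geometric_of_lt_one hδ₀ hδ₁).mul_right M)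
  rwa [mul_comm _ M, mul_le_mul_iff_left₀ (inv_pos.2 (sub_pos.2 hδ₁))] at h

lemma abel_sub_const (hu : Bdd u) (hδ₀ : 0 ≤ δ) (hδ₁ : δ < 1) (a : ℝ) :
    abel (fun t => u t - a) δ = abel u δ - a := by
  have hsum := (hu.summable_norm_pow_mul hδ₀ hδ₁).of_norm
  have hgeom := summable_geometric_of_lt_one hδ₀ hδ₁
  simp only [abel, mul_sub]
  rw [hsum.tsum_sub (hgeom.mul_right a), tsum_mul_right, tsum_geometric_of_lt_one hδ₀ hδ₁,
    mul_sub, ← mul_assoc, mul_inv_cancel₀ (sub_pos.2 hδ₁).ne', one_mul]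

lemma abel_le_of_sum_range_sub_le (hu : Bdd u) (hδ₀ : 0 ≤ δ) (hδ₁ : δ < 1) {a M : ℝ}
    (hM : ∀ n, ∑ t ∈ range n, (u t - a) ≤ M) : abel u δ ≤ a + (1 - δ) * M := by
  have h := tsum_pow_mul_le_of_sum_range_le (hu.sub_const a) hδ₀ hδ₁ hM
  calc abel u δ = a + (1 - δ) * ∑' t, δ ^ t * (u t - a) := by
        rw [← abel, abel_sub_const hu hδ₀ hδ₁]; ring
    _ ≤ a + (1 - δ) * M := by gcongr

lemma abs_abel_le {C : ℝ} (hC : ∀ t, |u t| ≤ C) (hδ₀ : 0 ≤ δ) (hδ₁ : δ < 1) :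
    |abel u δ| ≤ C := by
  have hδ : 0 < 1 - δ := sub_pos.2 hδ₁
  have h : ‖∑' t, δ ^ t * u t‖ ≤ C * (1 - δ)⁻¹ :=
    tsum_of_norm_bounded ((hasSum_geometric_of_lt_one hδ₀ hδ₁).mul_left C) fun t => by
      rw [norm_mul, norm_pow, Real.norm_of_nonneg hδ₀, Real.norm_eq_abs, mul_comm]
      exact mul_le_mul_of_nonneg_right (hC t) (pow_nonneg hδ₀ t)
  rw [abel, abs_mul, abs_of_pos hδ, ← Real.norm_eq_abs]
  calc (1 - δ) * ‖∑' t, δ ^ t * u t‖ ≤ (1 - δ) * (C * (1 - δ)⁻¹) := by gcongr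
    _ = C := by field_simp

end Abel

theorem stmt_1 (u : ℕ → ℝ) (hu : Bdd u) (k : ℕ) (hk : 0 < k) :
    limsup (fun δ : ℝ => abel u δ) (nhdsWithin 1 (Set.Iio 1)) ≤
      limsup (fun T : ℕ => avg u (k * T)) atTop := by
  have ⟨C, hC⟩ := hu
  have hδ : ∀ᶠ δ in 𝓝[<] (1 : ℝ), δ ∈ Set.Ioo 0 1 := Ioo_mem_nhdsLT one_pos
  refine le_of_forall_gt_imp_ge_of_dense fun a ha => ?_
  obtain ⟨M, hM⟩ := exists_sum_range_sub_le hu hk (eventually_lt_of_limsup_lt ha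
    (isBoundedUnder_of_eventually_le (.of_forall fun T => (le_abs_self _).trans (abs_avg_le hC _))))
  have hlim : Tendsto (fun δ : ℝ => a + (1 - δ) * M) (𝓝[<] 1) (𝓝 a) := by
    have : Continuous fun δ : ℝ => a + (1 - δ) * M := by fun_prop
    simpa using (this.tendsto 1).mono_left nhdsWithin_le_nhds
  have hle : ∀ᶠ δ in 𝓝[<] (1 : ℝ), abel u δ ≤ a + (1 - δ) * M :=
    hδ.mono fun δ ⟨h₀, h₁⟩ => abel_le_of_sum_range_sub_le hu h₀.le h₁ hM
  have hcobdd : IsCoboundedUnder (· ≤ ·) (𝓝[<] (1 : ℝ)) (abel u) :=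
    isCoboundedUnder_le_of_eventually_le _ (hδ.mono fun δ ⟨h₀, h₁⟩ =>
      neg_le_of_abs_le (abs_abel_le hC h₀.le h₁))
  calc limsup (abel u) (𝓝[<] 1) ≤ limsup (fun δ : ℝ => a + (1 - δ) * M) (𝓝[<] 1) :=
        limsup_le_limsup hle hcobdd hlim.isBoundedUnder_le
    _ = a := hlim.limsup_eq
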